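/- For every u ∈ S_n, the set Π(u) = { t ∈ S_n : t is the inverse of some v ∈ S_n with Δ_i(v^{-1}) = Δ_i(u^{-1}) for all i ∈ [n-1] } has cardinality 2^j for some j ≥ 1; equivalently, the number of permutations v ∈ S_n whose pyramidal sequence of consecutive differences equals that of u is a power of 2. Moreover, j equals the number of indices i ∈ [n-1] such that Δ_i(u^{-1}) = (d,...,d) (n-i equal entries) and Δ_{i+1}(u^{-1}) = (d,...,d) (n-i-1 equal entries) for the same d, where Δ_n is by convention the empty vector. -/

import Mathlib

/-- Vector of consecutive differences of a list. -/
def diffs (l : List ℕ) : List ℕ := List.zipWith (fun a b => b - a) l l.tail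

/-- Δ(X): consecutive differences of the increasing enumeration of a finite set. -/
def setDiffs (X : Finset ℕ) : List ℕ := diffs (X.sort (· ≤ ·))

/-- c̄(Δ) = {c, c+d₁, c+d₁+d₂, ...}. -/
def barSet (c : ℕ) (ds : List ℕ) : Finset ℕ :=
  ((List.range (ds.length + 1)).map (fun j => c + (ds.take j).sum)).toFinset

/-- A finite set (of cardinality ≥ 2) is periodic if its consecutive differences are constant. -/
def PeriodicSet (X : Finset ℕ) : Prop :=
  2 ≤ X.card ∧ ∃ d, 0 < d ∧ setDiffs X = List.replicate (X.card - 1) d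

/-- A vector is periodic if all its entries are equal to some positive d. -/
def PerVec (v : List ℕ) : Prop := ∃ d, 0 < d ∧ v = List.replicate v.length d

/-- Membership in D_{|u|,n}: injective word over [n], complement periodic,
no proper nonempty prefix has a periodic complement. -/
def MemD (n : ℕ) (u : List ℕ) : Prop :=
  u.Nodup ∧ (∀ x ∈ u, x ∈ Finset.Icc 1 n) ∧
  PeriodicSet (Finset.Icc 1 n \ u.toFinset) ∧
  ∀ j, 1 ≤ j → j < u.length → ¬ PeriodicSet (Finset.Icc 1 n \ (u.take j).toFinset)

/-- A list is a permutation word of [n]. -/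
def IsPermList (n : ℕ) (s : List ℕ) : Prop :=
  s.length = n ∧ s.Nodup ∧ s.toFinset = Finset.Icc 1 n

/-- s is the inverse permutation word of u (both permutations of [n]). -/
def InvPerm (n : ℕ) (u s : List ℕ) : Prop :=
  IsPermList n u ∧ IsPermList n s ∧
  ∀ j k, j < n → k < n → (u.getD j 0 = k + 1 ↔ s.getD k 0 = j + 1)

/-- Δ_i(s): consecutive differences of {s_i, ..., s_n} (1-indexed). -/
def deltaVec (s : List ℕ) (i : ℕ) : List ℕ := setDiffs (s.drop (i - 1)).toFinset

/-- One transition of a pyramidal sequence: merge two adjacent entries,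
or delete the leftmost, or delete the rightmost entry. -/
def PyrStep (v w : List ℕ) : Prop :=
  (∃ l a b r, v = l ++ a :: b :: r ∧ w = l ++ (a + b) :: r) ∨
  (∃ a r, v = a :: r ∧ w = r) ∨
  (∃ l a, v = l ++ [a] ∧ w = l)

/-- A pyramidal sequence of vectors of size n, encoded as a list [Δ₁, ..., Δ_{n-1}]. -/
def IsPyramidal (n : ℕ) (P : List (List ℕ)) : Prop :=
  P.length = n - 1 ∧ P.getD 0 [] = List.replicate (n - 1) 1 ∧
  ∀ i, i + 1 < n - 1 → PyrStep (P.getD i []) (P.getD (i + 1) [])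

/-- A trapezoidal sequence of height i of size n, encoded as [Δ₁, ..., Δ_{i+1}]:
Δ_{i+1} periodic, Δ_j not periodic for 2 ≤ j ≤ i. -/
def IsTrapezoidal (n i : ℕ) (T : List (List ℕ)) : Prop :=
  T.length = i + 1 ∧ T.getD 0 [] = List.replicate (n - 1) 1 ∧
  (∀ j, j < i → PyrStep (T.getD j []) (T.getD (j + 1) [])) ∧
  PerVec (T.getD i []) ∧
  ∀ j, 1 ≤ j → j < i → ¬ PerVec (T.getD j [])

/-- Non-interval permutation of [m]: no prefix of length l, 2 ≤ l < m, has as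
letter set an interval of consecutive integers. -/
def IsNonIntervalPerm (m : ℕ) (s : List ℕ) : Prop :=
  IsPermList m s ∧ ∀ l, 2 ≤ l → l < m → ¬ ∃ a, (s.take l).toFinset = Finset.Icc a (a + l - 1)

/-- v is obtained from u by a rigid shift of height h by k places to the left:
columns of height < h are untouched and receive nothing; each position of height ≥ h
receives the excess (over h) of the column k places to its right; every block strictly
above the cut lands on a column of height ≥ h. -/
def RigidShiftL (n h k : ℕ) (u v : List ℕ) : Prop :=
  IsPermList n u ∧ IsPermList n v ∧
  (∀ j, j < n → u.getD j 0 < h → v.getD j 0 = u.getD j 0) ∧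
  (∀ j, j < n → h ≤ u.getD j 0 → v.getD j 0 = h + (u.getD (j + k) 0 - h)) ∧
  (∀ j, j < n → h < u.getD j 0 → k ≤ j ∧ h ≤ u.getD (j - k) 0)

/-- Strong shift equivalence: finite sequences of rigid shifts (in either direction). -/
def StrongShiftEq (n : ℕ) (u v : List ℕ) : Prop :=
  Relation.ReflTransGen (fun a b => ∃ h k, RigidShiftL n h k a b ∨ RigidShiftL n h k b a) u v

/-- Shift equivalence: finite sequences of rigid shifts and reversals. -/
def ShiftEq (n : ℕ) (u v : List ℕ) : Prop :=
  Relation.ReflTransGen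
    (fun a b => (∃ h k, RigidShiftL n h k a b ∨ RigidShiftL n h k b a) ∨ b = a.reverse) u v

/-- Super-strong Wilf equivalence of permutation words of [n], characterized by
equality of all Δ_i of the inverses. -/
def SSWilf (n : ℕ) (u v : List ℕ) : Prop :=
  ∃ s t, InvPerm n u s ∧ InvPerm n v t ∧ ∀ i, 1 ≤ i → i ≤ n - 1 → deltaVec s i = deltaVec t i

/-! Write a word as `t = b :: t'`. Its letter set `X` is fixed, and `Δ₂(t)` is the difference
vector of `X \ {b}`. Finite sets of equal size with equal difference vectors are translates of
each other, so some letter `b` always matches `Δ₂(s)`. If two letters `b ≠ c` both match, then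
`X \ {b}` and `X \ {c}` are distinct translates, so they share neither their minimum nor their
maximum; hence `{b, c} = {min X, max X}`. Removing `min X` or `max X` turns the difference vector
`Δ` of `X` into `Δ.tail` or `Δ.dropLast`, so `Δ.tail = Δ.dropLast` and `Δ` is constant. Thus each
letter of `t` has one choice, or two exactly at the indices where `Δ_i` and `Δ_{i+1}` are periodic
with the same period, and the count is a product of `1`s and `2`s. -/

namespace Finset

variable {α : Type*} [LinearOrder α]

theorem head?_sort {X : Finset α} (hX : X.Nonempty) :
    (X.sort (· ≤ ·)).head? = some (X.min' hX) := by
  rw [min'_eq_sorted_zero, List.head?_eq_getElem?, List.getElem?_eq_getElem]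

theorem min'_erase_of_ne {X : Finset α} {x : α} (hX : X.Nonempty) (hx : x ≠ X.min' hX)
    (hne : (X.erase x).Nonempty) : (X.erase x).min' hne = X.min' hX :=
  le_antisymm (min'_le _ _ (mem_erase.mpr ⟨hx.symm, X.min'_mem hX⟩))
    (min'_subset hne (erase_subset x X))

theorem max'_erase_of_ne {X : Finset α} {x : α} (hX : X.Nonempty) (hx : x ≠ X.max' hX)
    (hne : (X.erase x).Nonempty) : (X.erase x).max' hne = X.max' hX :=
  le_antisymm (max'_subset hne (erase_subset x X))
    (le_max' _ _ (mem_erase.mpr ⟨hx.symm, X.max'_mem hX⟩))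

end Finset

theorem List.exists_eq_replicate_of_tail_eq_dropLast {α : Type*} [Inhabited α] {D : List α}
    (h : D.tail = D.dropLast) : ∃ d, D = replicate D.length d := by
  rcases D with _ | ⟨d, D'⟩
  · exact ⟨default, rfl⟩
  refine ⟨d, eq_replicate_iff.mpr ⟨rfl, fun x hx => ?_⟩⟩
  obtain ⟨i, hi, rfl⟩ := getElem_of_mem hx
  induction i with
  | zero => rfl
  | succ i ih =>
    have hstep := getElem_of_eq h (i := i) (by simp at hi ⊢; omega)
    simp only [tail_cons, getElem_dropLast] at hstep
    rw [getElem_cons_succ, hstep]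
    exact ih (by omega) (getElem_mem _)

section

open List

theorem diffs_cons_cons (a b : ℕ) (l : List ℕ) : diffs (a :: b :: l) = (b - a) :: diffs (b :: l) :=
  rfl

theorem length_diffs (l : List ℕ) : (diffs l).length = l.length - 1 := by
  simp [diffs]

theorem getElem_diffs (l : List ℕ) (i : ℕ) (h : i < (diffs l).length) :
    (diffs l)[i] = l[i + 1]'(by simp [length_diffs] at h; omega) -
      l[i]'(by simp [length_diffs] at h; omega) := by
  simp [diffs, getElem_zipWith, getElem_tail]

theorem diffs_map_add (l : List ℕ) (c : ℕ) : diffs (l.map (· + c)) = diffs l := by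
  simp [diffs, zipWith_map, ← map_tail, Nat.add_sub_add_right]

theorem diffs_tail (l : List ℕ) : diffs l.tail = (diffs l).tail := by
  rcases l with _ | ⟨a, _ | ⟨b, l⟩⟩ <;> rfl

theorem diffs_dropLast (l : List ℕ) : diffs l.dropLast = (diffs l).dropLast := by
  apply ext_getElem
  · simp [length_diffs]
  · intro i h₁ h₂
    simp [getElem_diffs, getElem_dropLast]

theorem eq_map_add_of_diffs_eq {c : ℕ} :
    ∀ {l₁ l₂ : List ℕ}, l₁.Pairwise (· ≤ ·) → l₂.Pairwise (· ≤ ·) → l₁.length = l₂.length →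
      diffs l₁ = diffs l₂ → l₂.head? = l₁.head?.map (· + c) → l₂ = l₁.map (· + c)
  | [], [], _, _, _, _, _ => rfl
  | [a], [b], _, _, _, _, hhead => by simp_all
  | a :: a' :: l₁, b :: b' :: l₂, h₁, h₂, hlen, hd, hhead => by
    simp only [diffs_cons_cons, cons.injEq] at hd
    simp only [head?_cons, Option.map_some, Option.some.injEq] at hhead
    have ha := rel_of_pairwise_cons h₁ mem_cons_self
    have hb := rel_of_pairwise_cons h₂ mem_cons_self
    have ih := eq_map_add_of_diffs_eq (c := c) h₁.of_cons h₂.of_cons (by simpa using hlen) hd.2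
      (by simp; omega)
    rw [map_cons, ih, hhead]
  | [], _ :: _, _, _, hlen, _, _ | _ :: _, [], _, _, hlen, _, _ => by simp at hlen
  | [_], _ :: _ :: _, _, _, hlen, _, _ | _ :: _ :: _, [_], _, _, hlen, _, _ => by simp at hlen

end

theorem length_setDiffs (X : Finset ℕ) : (setDiffs X).length = X.card - 1 := by
  simp [setDiffs, length_diffs]

theorem setDiffs_toFinset {l : List ℕ} (hl : l.Pairwise (· < ·)) :
    setDiffs l.toFinset = diffs l := by
  rw [setDiffs, (List.toFinset_sort _ hl.nodup).mpr (hl.imp le_of_lt)]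

theorem setDiffs_image_add (X : Finset ℕ) (c : ℕ) : setDiffs (X.image (· + c)) = setDiffs X := by
  have hl : ((X.sort (· ≤ ·)).map (· + c)).Pairwise (· < ·) :=
    List.pairwise_map.mpr (X.sortedLT_sort.pairwise.imp fun h => by omega)
  have hX : X.image (· + c) = ((X.sort (· ≤ ·)).map (· + c)).toFinset := by
    ext; simp
  rw [hX, setDiffs_toFinset hl, diffs_map_add, setDiffs]

theorem image_add_of_setDiffs_eq_of_min'_le {X Y : Finset ℕ} (hX : X.Nonempty) (hY : Y.Nonempty)
    (hcard : X.card = Y.card) (hd : setDiffs X = setDiffs Y) (hle : X.min' hX ≤ Y.min' hY) :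
    Y = X.image (· + (Y.min' hY - X.min' hX)) := by
  have hsort := eq_map_add_of_diffs_eq (Finset.pairwise_sort X _) (Finset.pairwise_sort Y _)
    (by simp [hcard]) hd (c := Y.min' hY - X.min' hX)
    (by simp [Finset.head?_sort hX, Finset.head?_sort hY]; omega)
  calc Y = (Y.sort (· ≤ ·)).toFinset := (Finset.sort_toFinset _ _).symm
    _ = _ := by rw [hsort]; ext; simp

theorem exists_image_add_of_setDiffs_eq {X Y : Finset ℕ} (hcard : X.card = Y.card)
    (hd : setDiffs X = setDiffs Y) : ∃ c, Y = X.image (· + c) ∨ X = Y.image (· + c) := by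
  rcases X.eq_empty_or_nonempty with rfl | hX
  · exact ⟨0, Or.inl (by simp [Finset.card_eq_zero.mp hcard.symm])⟩
  have hY : Y.Nonempty := Finset.card_pos.mp (hcard ▸ hX.card_pos)
  rcases le_total (X.min' hX) (Y.min' hY) with h | h
  · exact ⟨_, Or.inl (image_add_of_setDiffs_eq_of_min'_le hX hY hcard hd h)⟩
  · exact ⟨_, Or.inr (image_add_of_setDiffs_eq_of_min'_le hY hX hcard.symm hd.symm h)⟩

theorem eq_of_setDiffs_eq {X Y : Finset ℕ} (hX : X.Nonempty) (hY : Y.Nonempty)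
    (hcard : X.card = Y.card) (hd : setDiffs X = setDiffs Y)
    (hend : X.min' hX = Y.min' hY ∨ X.max' hX = Y.max' hY) : X = Y := by
  have hmono (c : ℕ) : Monotone (· + c) := fun _ _ h => Nat.add_le_add_right h c
  obtain ⟨c, rfl | rfl⟩ := exists_image_add_of_setDiffs_eq hcard hd <;>
  · have hc : c = 0 := by
      simp only [Finset.min'_image (hmono c), Finset.max'_image (hmono c)] at hend
      omega
    simp [hc]

theorem setDiffs_erase (X : Finset ℕ) (b : ℕ) :
    setDiffs (X.erase b) = diffs ((X.sort (· ≤ ·)).erase b) := by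
  have hl : ((X.sort (· ≤ ·)).erase b).Pairwise (· < ·) :=
    X.sortedLT_sort.pairwise.sublist List.erase_sublist
  have hX : X.erase b = ((X.sort (· ≤ ·)).erase b).toFinset := by
    ext x
    simp [(Finset.sort_nodup X _).mem_erase_iff]
  rw [hX, setDiffs_toFinset hl]

theorem setDiffs_erase_min' {X : Finset ℕ} (hX : X.Nonempty) :
    setDiffs (X.erase (X.min' hX)) = (setDiffs X).tail := by
  rw [setDiffs_erase, Finset.min'_eq_sorted_zero, (Finset.sort_nodup X _).erase_getElem,
    List.eraseIdx_zero, diffs_tail, setDiffs]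

theorem setDiffs_erase_max' {X : Finset ℕ} (hX : X.Nonempty) :
    setDiffs (X.erase (X.max' hX)) = (setDiffs X).dropLast := by
  rw [setDiffs_erase, Finset.max'_eq_sorted_last, (Finset.sort_nodup X _).erase_getElem,
    List.eraseIdx_length_sub_one, diffs_dropLast, setDiffs]


theorem eq_min'_max'_of_setDiffs_erase_eq {X : Finset ℕ} (hX : X.Nonempty) {b c : ℕ} (hb : b ∈ X)
    (hc : c ∈ X) (hbc : b ≠ c) (hd : setDiffs (X.erase b) = setDiffs (X.erase c)) :
    (b = X.min' hX ∧ c = X.max' hX) ∨ (b = X.max' hX ∧ c = X.min' hX) := by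
  have hXb : (X.erase b).Nonempty := ⟨c, Finset.mem_erase.mpr ⟨hbc.symm, hc⟩⟩
  have hXc : (X.erase c).Nonempty := ⟨b, Finset.mem_erase.mpr ⟨hbc, hb⟩⟩
  have hcard : (X.erase b).card = (X.erase c).card := by
    rw [Finset.card_erase_of_mem hb, Finset.card_erase_of_mem hc]
  have hne : X.erase b ≠ X.erase c := fun h =>
    Finset.notMem_erase b X (h ▸ Finset.mem_erase.mpr ⟨hbc, hb⟩)
  have hmin : b = X.min' hX ∨ c = X.min' hX := by
    by_contra! h
    exact hne (eq_of_setDiffs_eq hXb hXc hcard hd (Or.inl (by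
      rw [Finset.min'_erase_of_ne hX h.1, Finset.min'_erase_of_ne hX h.2])))
  have hmax : b = X.max' hX ∨ c = X.max' hX := by
    by_contra! h
    exact hne (eq_of_setDiffs_eq hXb hXc hcard hd (Or.inr (by
      rw [Finset.max'_erase_of_ne hX h.1, Finset.max'_erase_of_ne hX h.2])))
  have hlt := X.min'_lt_max' hb hc hbc
  omega

theorem exists_setDiffs_eq_replicate_of_setDiffs_erase_eq {X : Finset ℕ} {b c : ℕ} (hb : b ∈ X)
    (hc : c ∈ X) (hbc : b ≠ c) (hd : setDiffs (X.erase b) = setDiffs (X.erase c)) :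
    ∃ d, setDiffs X = List.replicate (X.card - 1) d ∧
      setDiffs (X.erase b) = List.replicate (X.card - 2) d := by
  have hX : X.Nonempty := ⟨b, hb⟩
  have hends : setDiffs (X.erase (X.min' hX)) = setDiffs (X.erase b) ∧
      setDiffs (X.erase (X.max' hX)) = setDiffs (X.erase b) := by
    rcases eq_min'_max'_of_setDiffs_erase_eq hX hb hc hbc hd with ⟨hb', hc'⟩ | ⟨hb', hc'⟩
    · exact ⟨by rw [← hb'], by rw [← hc', hd]⟩
    · exact ⟨by rw [← hc', hd], by rw [← hb']⟩
  obtain ⟨d, hrep⟩ := List.exists_eq_replicate_of_tail_eq_dropLast (D := setDiffs X) (by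
    rw [← setDiffs_erase_min' hX, ← setDiffs_erase_max' hX, hends.1, hends.2])
  rw [length_setDiffs] at hrep
  refine ⟨d, hrep, ?_⟩
  rw [← hends.1, setDiffs_erase_min', hrep, List.tail_replicate, Nat.sub_sub]

theorem setDiffs_erase_eq_replicate_iff {X : Finset ℕ} (hX : X.Nonempty) {d b : ℕ} (hb : b ∈ X)
    (hrep : setDiffs X = List.replicate (X.card - 1) d) :
    setDiffs (X.erase b) = List.replicate (X.card - 2) d ↔ b = X.min' hX ∨ b = X.max' hX := by
  have hmin : setDiffs (X.erase (X.min' hX)) = List.replicate (X.card - 2) d := by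
    rw [setDiffs_erase_min', hrep, List.tail_replicate, Nat.sub_sub]
  constructor
  · intro h
    by_contra! hne
    rcases eq_min'_max'_of_setDiffs_erase_eq hX hb (X.min'_mem hX) hne.1 (h.trans hmin.symm) with
      ⟨h₁, -⟩ | ⟨h₁, -⟩
    · exact hne.1 h₁
    · exact hne.2 h₁
  · rintro (h | h) <;> rw [h]
    · exact hmin
    · rw [setDiffs_erase_max', hrep, List.dropLast_replicate, Nat.sub_sub]

theorem exists_setDiffs_erase_eq {X S : Finset ℕ} {a : ℕ} (ha : a ∉ S)
    (hcard : X.card = (insert a S).card) (hd : setDiffs X = setDiffs (insert a S)) :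
    ∃ b ∈ X, setDiffs (X.erase b) = setDiffs S := by
  have hinj (c : ℕ) : Function.Injective (· + c : ℕ → ℕ) := add_left_injective c
  obtain ⟨c, hc | hc⟩ := exists_image_add_of_setDiffs_eq hcard.symm hd.symm
  · refine ⟨a + c, hc ▸ Finset.mem_image_of_mem _ (Finset.mem_insert_self a S), ?_⟩
    rw [hc, ← Finset.image_erase (hinj c), Finset.erase_insert ha, setDiffs_image_add]
  · obtain ⟨x, hx, hxa⟩ := Finset.mem_image.mp (hc ▸ Finset.mem_insert_self a S)
    refine ⟨x, hx, ?_⟩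
    rw [← setDiffs_image_add _ c, Finset.image_erase (hinj c), ← hc, hxa, Finset.erase_insert ha]

open Classical in
theorem card_filter_setDiffs_erase_eq {X S : Finset ℕ} {a : ℕ} (ha : a ∉ S)
    (hcard : X.card = (insert a S).card) (hd : setDiffs X = setDiffs (insert a S)) :
    (X.filter fun b => setDiffs (X.erase b) = setDiffs S).card =
      if 2 ≤ X.card ∧ ∃ d, setDiffs X = List.replicate (X.card - 1) d ∧
        setDiffs S = List.replicate (X.card - 2) d then 2 else 1 := by
  obtain ⟨b₀, hb₀, hb₀S⟩ := exists_setDiffs_erase_eq ha hcard hd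
  have hX : X.Nonempty := ⟨b₀, hb₀⟩
  split_ifs with hamb
  · obtain ⟨hX2, d, hrep, hSd⟩ := hamb
    rw [Finset.card_eq_two]
    refine ⟨X.min' hX, X.max' hX, (X.min'_lt_max'_of_card hX2).ne, ?_⟩
    ext b
    simp only [Finset.mem_filter, Finset.mem_insert, Finset.mem_singleton, hSd]
    refine ⟨fun ⟨hb, hbS⟩ => (setDiffs_erase_eq_replicate_iff hX hb hrep).mp hbS, fun hends => ?_⟩
    have hb : b ∈ X := hends.elim (· ▸ X.min'_mem hX) (· ▸ X.max'_mem hX)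
    exact ⟨hb, (setDiffs_erase_eq_replicate_iff hX hb hrep).mpr hends⟩
  · rw [Finset.card_eq_one]
    refine ⟨b₀, Finset.eq_singleton_iff_unique_mem.mpr ⟨Finset.mem_filter.mpr ⟨hb₀, hb₀S⟩, ?_⟩⟩
    rintro b hb
    rw [Finset.mem_filter] at hb
    by_contra hne
    obtain ⟨d, hrep, hbd⟩ := exists_setDiffs_eq_replicate_of_setDiffs_erase_eq hb.1 hb₀ hne
      (hb.2.trans hb₀S.symm)
    exact hamb ⟨Finset.one_lt_card.mpr ⟨b, hb.1, b₀, hb₀, hne⟩, d, hrep, hb.2 ▸ hbd⟩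

def suffixDiffs (t : List ℕ) (k : ℕ) : List ℕ := setDiffs (t.drop k).toFinset

def matchingWords (X : Finset ℕ) (s : List ℕ) : Set (List ℕ) :=
  {t | t.Nodup ∧ t.toFinset = X ∧ ∀ k, suffixDiffs t (k + 1) = suffixDiffs s (k + 1)}

open Classical in
noncomputable def periodicPairIndices (s : List ℕ) : Finset ℕ :=
  (Finset.range (s.length - 1)).filter fun k => ∃ d,
    suffixDiffs s k = List.replicate (s.length - 1 - k) d ∧
    suffixDiffs s (k + 1) = List.replicate (s.length - 2 - k) d

theorem deltaVec_succ (s : List ℕ) (k : ℕ) : deltaVec s (k + 1) = suffixDiffs s k :=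
  rfl

theorem suffixDiffs_cons_succ (a : ℕ) (t : List ℕ) (k : ℕ) :
    suffixDiffs (a :: t) (k + 1) = suffixDiffs t k :=
  rfl

theorem matchingWords_finite (X : Finset ℕ) (s : List ℕ) : (matchingWords X s).Finite := by
  refine (X.sort (· ≤ ·)).permutations.toFinset.finite_toSet.subset fun t ht => ?_
  rw [Finset.mem_coe, List.mem_toFinset, List.mem_permutations,
    List.perm_ext_iff_of_nodup ht.1 (Finset.sort_nodup _ _)]
  intro x
  rw [← List.mem_toFinset, ht.2.1, Finset.mem_sort]

theorem matchingWords_empty_nil : matchingWords ∅ [] = {[]} := by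
  ext t
  simp only [matchingWords, Set.mem_ofPred_eq, Set.mem_singleton_iff, List.toFinset_eq_empty_iff]
  constructor
  · exact fun h => h.2.1
  · rintro rfl
    exact ⟨List.nodup_nil, rfl, fun _ => rfl⟩

theorem matchingWords_cons {X : Finset ℕ} (hX : X.Nonempty) (a : ℕ) (s : List ℕ) :
    matchingWords X (a :: s) =
      ⋃ b ∈ ((X.filter fun b => setDiffs (X.erase b) = setDiffs s.toFinset : Finset ℕ) : Set ℕ),
      (b :: ·) '' matchingWords (X.erase b) s := by
  ext t
  simp only [Set.mem_iUnion, Set.mem_image, Finset.mem_coe, Finset.mem_filter, exists_prop]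
  constructor
  · rintro ⟨hnd, htX, hsuf⟩
    obtain ⟨b, t', rfl⟩ : ∃ b t', t = b :: t' := by
      rcases t with _ | ⟨b, t'⟩
      · simp [← htX] at hX
      · exact ⟨b, t', rfl⟩
    have hbt' : b ∉ t' := (List.nodup_cons.mp hnd).1
    have ht'X : t'.toFinset = X.erase b := by
      rw [← htX, List.toFinset_cons, Finset.erase_insert (by simpa using hbt')]
    refine ⟨b, ⟨htX ▸ by simp, ?_⟩, t', ⟨(List.nodup_cons.mp hnd).2, ht'X, fun k => hsuf (k + 1)⟩,
      rfl⟩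
    rw [← ht'X]
    exact hsuf 0
  · rintro ⟨b, ⟨hbX, hbs⟩, t', ⟨hnd, ht'X, hsuf⟩, rfl⟩
    have hbt' : b ∉ t' := fun h => Finset.notMem_erase b X (ht'X ▸ List.mem_toFinset.mpr h)
    refine ⟨List.nodup_cons.mpr ⟨hbt', hnd⟩, ?_, ?_⟩
    · rw [List.toFinset_cons, ht'X, Finset.insert_erase hbX]
    · rintro (_ | k)
      · show setDiffs t'.toFinset = setDiffs s.toFinset
        rw [ht'X, hbs]
      · exact hsuf k

theorem card_periodicPairIndices_cons (a : ℕ) (s : List ℕ) :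
    (periodicPairIndices (a :: s)).card =
      (periodicPairIndices s).card + if 0 ∈ periodicPairIndices (a :: s) then 1 else 0 := by
  have hshift : (periodicPairIndices (a :: s)).erase 0 =
      (periodicPairIndices s).map ⟨(· + 1), add_left_injective 1⟩ := by
    ext k
    rcases k with _ | k
    · simp
    · simp only [periodicPairIndices, Finset.mem_erase, Finset.mem_map, Finset.mem_filter,
        Finset.mem_range, Function.Embedding.coeFn_mk]
      simp only [List.length_cons, suffixDiffs_cons_succ, add_left_inj, exists_eq_right]
      rw [show s.length + 1 - 1 - (k + 1) = s.length - 1 - k by omega,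
        show s.length + 1 - 2 - (k + 1) = s.length - 2 - k by omega]
      constructor
      · rintro ⟨-, h, hd⟩
        exact ⟨by omega, hd⟩
      · rintro ⟨h, hd⟩
        exact ⟨by omega, by omega, hd⟩
  split_ifs with h0
  · rw [← Finset.card_erase_add_one h0, hshift, Finset.card_map]
  · rw [← Finset.erase_eq_of_notMem h0, hshift, Finset.card_map, add_zero]

theorem zero_mem_periodicPairIndices_cons_iff {X : Finset ℕ} {a : ℕ} {s : List ℕ}
    (hcard : X.card = s.length + 1) (hd : setDiffs X = setDiffs (a :: s).toFinset) :
    0 ∈ periodicPairIndices (a :: s) ↔ 2 ≤ X.card ∧ ∃ d,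
      setDiffs X = List.replicate (X.card - 1) d ∧
      setDiffs s.toFinset = List.replicate (X.card - 2) d := by
  simp only [periodicPairIndices, Finset.mem_filter, Finset.mem_range]
  simp only [List.length_cons, suffixDiffs, List.drop_zero, List.drop_succ_cons, Nat.sub_zero,
    ← hd, ← hcard]
  exact and_congr_left' ⟨fun _ => by omega, fun _ => by omega⟩

theorem ncard_matchingWords (s : List ℕ) (hs : s.Nodup) (X : Finset ℕ) (hcard : X.card = s.length)
    (hd : setDiffs X = setDiffs s.toFinset) :
    (matchingWords X s).ncard = 2 ^ (periodicPairIndices s).card := by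
  induction s generalizing X with
  | nil =>
    rw [Finset.card_eq_zero.mp hcard, matchingWords_empty_nil, Set.ncard_singleton]
    rfl
  | cons a s ih =>
    have has : a ∉ s.toFinset := by simpa using (List.nodup_cons.mp hs).1
    have hcard' : X.card = (insert a s.toFinset).card := by
      rw [← List.toFinset_cons, List.toFinset_card_of_nodup hs, hcard]
    have hd' : setDiffs X = setDiffs (insert a s.toFinset) := by rw [hd, List.toFinset_cons]
    have hX : X.Nonempty := Finset.card_pos.mp (by simp [hcard])
    set B := X.filter fun b => setDiffs (X.erase b) = setDiffs s.toFinset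
    have hbranch : ∀ b ∈ B, ((b :: ·) '' matchingWords (X.erase b) s).ncard =
        2 ^ (periodicPairIndices s).card := by
      intro b hb
      rw [Finset.mem_filter] at hb
      rw [Set.ncard_image_of_injective _ List.cons_injective]
      exact ih (List.nodup_cons.mp hs).2 _ (by simp [Finset.card_erase_of_mem hb.1, hcard]) hb.2
    rw [matchingWords_cons hX, B.finite_toSet.ncard_biUnion
      (fun b _ => (matchingWords_finite _ _).image _) ?disj, finsum_mem_coe_finset,
      Finset.sum_congr rfl hbranch, Finset.sum_const, smul_eq_mul,
      card_filter_setDiffs_erase_eq has hcard' hd', card_periodicPairIndices_cons]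
    · have h0 := zero_mem_periodicPairIndices_cons_iff (by simpa using hcard) hd
      simp only [← h0]
      split_ifs <;> ring
    · refine fun b _ c _ hbc => Set.disjoint_left.mpr ?_
      rintro _ ⟨t, -, rfl⟩ ⟨t', -, h⟩
      exact hbc (List.cons.inj h).1.symm

theorem suffixDiffs_eq_nil {t : List ℕ} {k : ℕ} (h : t.length ≤ k + 1) : suffixDiffs t k = [] := by
  rw [← List.length_eq_zero_iff, suffixDiffs, length_setDiffs]
  have := (t.drop k).toFinset_card_le
  simp only [List.length_drop] at this
  omega

theorem setOf_deltaVec_eq {n : ℕ} {s : List ℕ} (hs : IsPermList n s) :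
    {t : List ℕ | IsPermList n t ∧ ∀ i, 1 ≤ i → i ≤ n - 1 → deltaVec t i = deltaVec s i} =
      matchingWords (Finset.Icc 1 n) s := by
  obtain ⟨hlen, -, hsX⟩ := hs
  ext t
  simp only [IsPermList, matchingWords, Set.mem_ofPred_eq]
  constructor
  · rintro ⟨⟨htlen, hnd, htX⟩, hΔ⟩
    refine ⟨hnd, htX, fun k => ?_⟩
    by_cases hk : k + 2 ≤ n - 1
    · exact hΔ (k + 2) (by omega) hk
    · rw [suffixDiffs_eq_nil (by omega), suffixDiffs_eq_nil (by omega)]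
  · rintro ⟨hnd, htX, hsuf⟩
    have htlen : t.length = n := by
      rw [← List.toFinset_card_of_nodup hnd, htX, Nat.card_Icc, Nat.add_sub_cancel]
    refine ⟨⟨htlen, hnd, htX⟩, fun i hi _ => ?_⟩
    obtain ⟨_ | k, rfl⟩ : ∃ k, i = k + 1 := ⟨i - 1, by omega⟩
    · show setDiffs t.toFinset = setDiffs s.toFinset
      rw [htX, hsX]
    · exact hsuf k

theorem setOf_periodic_pair_eq {n : ℕ} {s : List ℕ} (hlen : s.length = n) :
    {i : ℕ | 1 ≤ i ∧ i ≤ n - 1 ∧ ∃ d, deltaVec s i = List.replicate (n - i) d ∧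
      deltaVec s (i + 1) = List.replicate (n - i - 1) d} =
      ((periodicPairIndices s).map ⟨(· + 1), add_left_injective 1⟩ : Set ℕ) := by
  subst hlen
  ext i
  simp only [Set.mem_ofPred_eq, Finset.coe_map, Function.Embedding.coeFn_mk, Set.mem_image,
    Finset.mem_coe, periodicPairIndices, Finset.mem_filter, Finset.mem_range]
  constructor
  · rintro ⟨hi, hin, hd⟩
    obtain ⟨k, rfl⟩ : ∃ k, i = k + 1 := ⟨i - 1, by omega⟩
    refine ⟨k, ⟨by omega, ?_⟩, rfl⟩
    simp only [deltaVec_succ] at hd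
    rwa [show s.length - 1 - k = s.length - (k + 1) by omega,
      show s.length - 2 - k = s.length - (k + 1) - 1 by omega]
  · rintro ⟨k, ⟨hk, hd⟩, rfl⟩
    refine ⟨by omega, by omega, ?_⟩
    simp only [deltaVec_succ]
    rwa [show s.length - 1 - k = s.length - (k + 1) by omega,
      show s.length - 2 - k = s.length - (k + 1) - 1 by omega] at hd

theorem one_le_card_periodicPairIndices {s : List ℕ} (hs : s.Nodup) (hlen : 2 ≤ s.length) :
    1 ≤ (periodicPairIndices s).card := by
  refine Finset.card_pos.mpr ⟨s.length - 2, ?_⟩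
  have hcard : (s.drop (s.length - 2)).toFinset.card = 2 := by
    rw [List.toFinset_card_of_nodup ((List.drop_sublist _ _).nodup hs), List.length_drop]
    omega
  obtain ⟨d, hd⟩ := List.length_eq_one_iff.mp
    (show (suffixDiffs s (s.length - 2)).length = 1 by rw [suffixDiffs, length_setDiffs, hcard])
  simp only [periodicPairIndices, Finset.mem_filter, Finset.mem_range]
  refine ⟨by omega, d, ?_, ?_⟩
  · rw [hd, show s.length - 1 - (s.length - 2) = 1 by omega, List.replicate_one]
  · rw [suffixDiffs_eq_nil (by omega), show s.length - 2 - (s.length - 2) = 0 by omega,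
      List.replicate_zero]

theorem stmt14 (n : ℕ) (hn : 2 ≤ n) (u s : List ℕ) (h : InvPerm n u s) :
    ∃ j, 1 ≤ j ∧
      Nat.card {t : List ℕ | IsPermList n t ∧
        ∀ i, 1 ≤ i → i ≤ n - 1 → deltaVec t i = deltaVec s i} = 2 ^ j ∧
      j = Nat.card {i : ℕ | 1 ≤ i ∧ i ≤ n - 1 ∧ ∃ d,
        deltaVec s i = List.replicate (n - i) d ∧
        deltaVec s (i + 1) = List.replicate (n - i - 1) d} := by
  obtain ⟨hlen, hnd, hsX⟩ := h.2.1
  refine ⟨(periodicPairIndices s).card, one_le_card_periodicPairIndices hnd (hlen ▸ hn), ?_, ?_⟩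
  · rw [Nat.card_coe_set_eq, setOf_deltaVec_eq h.2.1]
    exact ncard_matchingWords s hnd _ (by simp [hlen]) (by rw [hsX])
  · rw [Nat.card_coe_set_eq, setOf_periodic_pair_eq hlen, Set.ncard_coe_finset, Finset.card_map]
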